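/- Fix a real α > 1 and define G(λ) = (2/sinh(2λ))·(α + coth(2λ)), the analytic continuation of the derivative of the phase function g(λ) = i·(α·p(λ) + cos(p(λ))). Then for every real x: −Im G(x + iπ/4) = 2·(α + tanh(2x))/cosh(2x) > 0 and −Im G(x − iπ/4) = −2·(α + tanh(2x))/cosh(2x) < 0. Consequently the y-derivative ∂_y Re g(x + iy) is strictly positive on the line y = π/4 and strictly negative on the line y = −π/4. -/

import Mathlib

open Complex Real

/-!
On the lines `Im λ = ±π/4` one has `sinh 2λ = ±i cosh 2x` and `cosh 2λ = ±i sinh 2x`, so `G` is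
purely imaginary there, and the sign of `Im G` is that of `α + tanh 2x > α - 1 > 0`.

For the derivative, `i cos p = (tanh λ - coth λ)/2` and `i α p = α Log(-i tanh λ)`, so `Re g` is
everywhere the real part of `F(λ) = α Log(tanh λ) + (tanh λ - coth λ)/2`. Unlike `g`, whose
cut `-i tanh λ ∈ (-∞, 0]` meets the line `y = -π/4` at `x = 0`, `F` is holomorphic wherever
`Im tanh λ ≠ 0`, in particular on both lines, and `F' = G` there; Cauchy–Riemann gives
`∂_y Re g = -Im G`.
-/

/-- The momentum function of the XX chain: `p(λ) = -i Log(-i tanh λ)`. -/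
noncomputable def momentum (l : ℂ) : ℂ := -Complex.I * Complex.log (-Complex.I * Complex.tanh l)

/-- The phase function `g(λ) = i (α p(λ) + cos(p(λ)))` of the wave factors. -/
noncomputable def phase (α : ℝ) (l : ℂ) : ℂ :=
  Complex.I * ((α : ℂ) * momentum l + Complex.cos (momentum l))

/-- The analytic continuation of the derivative of the phase function:
`G(λ) = (2/sinh(2λ)) (α + coth(2λ))`. -/
noncomputable def phaseDeriv (α : ℝ) (l : ℂ) : ℂ :=
  (2 / Complex.sinh (2 * l)) * ((α : ℂ) + Complex.cosh (2 * l) / Complex.sinh (2 * l))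

namespace Complex

theorem sinh_ne_zero_and_cosh_ne_zero_of_tanh_ne_zero {z : ℂ} (h : tanh z ≠ 0) :
    sinh z ≠ 0 ∧ cosh z ≠ 0 := by
  rwa [tanh_eq_sinh_div_cosh, div_ne_zero_iff] at h

theorem hasDerivAt_tanh {z : ℂ} (h : cosh z ≠ 0) : HasDerivAt tanh (1 / cosh z ^ 2) z := by
  have := (hasDerivAt_sinh z).div (hasDerivAt_cosh z) h
  rw [funext fun w => tanh_eq_sinh_div_cosh w]
  exact this.congr_deriv (by rw [← cosh_sq_sub_sinh_sq z]; ring)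

theorem im_tanh_add_I_mul (x y : ℝ) :
    (tanh (x + I * y)).im = Real.sin (2 * y) / (Real.cosh (2 * x) + Real.cos (2 * y)) := by
  rw [show (x : ℂ) + I * y = x + y * I by ring, tanh_eq_sinh_div_cosh, div_im, sinh_add, cosh_add,
    sinh_mul_I, cosh_mul_I, ← ofReal_sinh, ← ofReal_cosh, ← ofReal_sin, ← ofReal_cos]
  simp only [normSq_apply, add_re, add_im, mul_re, mul_im, ofReal_re, ofReal_im, I_re, I_im,
    mul_zero, zero_mul, add_zero, zero_add, sub_zero, mul_one]
  rw [div_sub_div_same, Real.sin_two_mul, Real.cos_two_mul, Real.cosh_two_mul,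
    ← mul_div_mul_left _ _ (two_ne_zero' ℝ)]
  have hx := Real.cosh_sq_sub_sinh_sq x
  have hy := Real.sin_sq_add_cos_sq y
  congr 1
  · linear_combination 2 * Real.sin y * Real.cos y * hx
  · linear_combination (2 * Real.cos y ^ 2 - 1) * hx + 2 * Real.sinh x ^ 2 * hy

theorem tanh_add_I_mul_mem_slitPlane (x : ℝ) {y : ℝ} (hy : Real.sin (2 * y) ≠ 0) :
    tanh (x + I * y) ∈ slitPlane := by
  have hden : 0 < Real.cosh (2 * x) + Real.cos (2 * y) := by
    have := Real.sin_sq_add_cos_sq (2 * y)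
    nlinarith [Real.one_le_cosh (2 * x), Real.neg_one_le_cos (2 * y), sq_pos_of_ne_zero hy]
  exact mem_slitPlane_iff.2 <| Or.inr <| by
    rw [im_tanh_add_I_mul]; exact div_ne_zero hy hden.ne'

end Complex

theorem cos_neg_I_mul_log {w : ℂ} (hw : w ≠ 0) : cos (-I * log w) = (w + w⁻¹) / 2 := by
  rw [← cosh_mul_I, show -I * log w * I = log w by linear_combination -log w * I_sq, Complex.cosh,
    Complex.exp_neg, exp_log hw]

theorem phase_eq {l : ℂ} (α : ℝ) (hl : tanh l ≠ 0) :
    phase α l = α * log (-I * tanh l) + (tanh l - (tanh l)⁻¹) / 2 := by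
  rw [phase, momentum, cos_neg_I_mul_log (mul_ne_zero (neg_ne_zero.2 I_ne_zero) hl), mul_inv,
    inv_neg, inv_I]
  linear_combination
    (-α * log (-I * tanh l) - tanh l / 2 + (tanh l)⁻¹ / 2) * I_sq

noncomputable def phaseBranch (α : ℝ) (l : ℂ) : ℂ :=
  α * log (tanh l) + (tanh l - (tanh l)⁻¹) / 2

theorem re_phase_eq_re_phaseBranch (α : ℝ) (l : ℂ) :
    (phase α l).re = (phaseBranch α l).re := by
  by_cases hl : tanh l = 0
  · -- both real parts vanish, by the junk values `log 0 = 0` and `0⁻¹ = 0`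
    simp [phase, momentum, phaseBranch, hl]
  · rw [phase_eq α hl, phaseBranch]
    simp [log_re]

theorem hasDerivAt_phaseBranch (α : ℝ) {l : ℂ} (h : tanh l ∈ slitPlane) :
    HasDerivAt (phaseBranch α) (phaseDeriv α l) l := by
  obtain ⟨hs, hc⟩ := sinh_ne_zero_and_cosh_ne_zero_of_tanh_ne_zero (slitPlane_ne_zero h)
  have ht := hasDerivAt_tanh hc
  have := ((ht.clog h).const_mul (α : ℂ)).add
    ((ht.sub (ht.inv (slitPlane_ne_zero h))).div_const 2)
  refine this.congr_deriv ?_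
  rw [phaseDeriv, Complex.tanh_eq_sinh_div_cosh, Complex.sinh_two_mul, Complex.cosh_two_mul]
  field_simp
  ring

theorem hasDerivAt_re_phase_vertical (α x : ℝ) {y : ℝ} (h : tanh (x + I * y) ∈ slitPlane) :
    HasDerivAt (fun t : ℝ => (phase α (x + I * t)).re) (-(phaseDeriv α (x + I * y)).im) y := by
  have hline : HasDerivAt (fun t : ℂ => x + I * t) I y := by
    simpa using ((hasDerivAt_id (y : ℂ)).const_mul I).const_add (x : ℂ)
  have := ((hasDerivAt_phaseBranch α h).comp (y : ℂ) hline).real_of_complex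
  simp_rw [re_phase_eq_re_phaseBranch]
  rwa [mul_I_re] at this

theorem im_phaseDeriv_eq (α : ℝ) {l : ℂ} {C S : ℝ} (hC : C ≠ 0) (hs : sinh (2 * l) = C * I)
    (hc : cosh (2 * l) = S * I) : (phaseDeriv α l).im = -(2 * (α + S / C) / C) := by
  have : phaseDeriv α l = ((-(2 * (α + S / C) / C) : ℝ) : ℂ) * I := by
    have hC' : (C : ℂ) ≠ 0 := ofReal_ne_zero.2 hC
    rw [phaseDeriv, hs, hc, mul_div_mul_right _ _ I_ne_zero]
    push_cast
    field_simp
    linear_combination (C * α + S : ℂ) * I_sq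
  rw [this, mul_I_im, ofReal_re]

theorem sinh_cosh_two_mul_add_I_mul_pi_div_four (x : ℝ) :
    Complex.sinh (2 * (x + I * (π / 4))) = (Real.cosh (2 * x) : ℝ) * I ∧
      Complex.cosh (2 * (x + I * (π / 4))) = (Real.sinh (2 * x) : ℝ) * I := by
  rw [show 2 * ((x : ℂ) + I * (π / 4)) = (2 * x : ℝ) + (π / 2 : ℝ) * I by push_cast; ring,
    Complex.sinh_add, Complex.cosh_add, sinh_mul_I, cosh_mul_I, ← ofReal_sin, ← ofReal_cos,
    Real.sin_pi_div_two, Real.cos_pi_div_two]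
  simp

theorem sinh_cosh_two_mul_sub_I_mul_pi_div_four (x : ℝ) :
    Complex.sinh (2 * (x - I * (π / 4))) = (-Real.cosh (2 * x) : ℝ) * I ∧
      Complex.cosh (2 * (x - I * (π / 4))) = (-Real.sinh (2 * x) : ℝ) * I := by
  rw [show 2 * ((x : ℂ) - I * (π / 4)) = (2 * x : ℝ) + (-(π / 2) : ℝ) * I by
      push_cast; ring,
    Complex.sinh_add, Complex.cosh_add, sinh_mul_I, cosh_mul_I, ← ofReal_sin, ← ofReal_cos,
    Real.sin_neg, Real.cos_neg, Real.sin_pi_div_two, Real.cos_pi_div_two]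
  simp

/-- For `α > 1` and every real `x`:
`-Im G(x + iπ/4) = 2(α + tanh(2x))/cosh(2x) > 0` and
`-Im G(x - iπ/4) = -2(α + tanh(2x))/cosh(2x) < 0`.
Consequently `∂_y Re g(x + iy)` is strictly positive at `y = π/4` and strictly
negative at `y = -π/4`. -/
theorem im_phaseDeriv_on_lines (α : ℝ) (hα : 1 < α) (x : ℝ) :
    -(phaseDeriv α (x + Complex.I * (π / 4))).im
        = 2 * (α + Real.tanh (2 * x)) / Real.cosh (2 * x) ∧
    0 < 2 * (α + Real.tanh (2 * x)) / Real.cosh (2 * x) ∧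
    -(phaseDeriv α (x - Complex.I * (π / 4))).im
        = -(2 * (α + Real.tanh (2 * x)) / Real.cosh (2 * x)) ∧
    -(2 * (α + Real.tanh (2 * x)) / Real.cosh (2 * x)) < 0 ∧
    HasDerivAt (fun y : ℝ => (phase α ((x : ℂ) + Complex.I * (y : ℂ))).re)
      (2 * (α + Real.tanh (2 * x)) / Real.cosh (2 * x)) (π / 4) ∧
    HasDerivAt (fun y : ℝ => (phase α ((x : ℂ) + Complex.I * (y : ℂ))).re)
      (-(2 * (α + Real.tanh (2 * x)) / Real.cosh (2 * x))) (-(π / 4)) := by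
  have hcosh := Real.cosh_pos (2 * x)
  obtain ⟨hs, hc⟩ := sinh_cosh_two_mul_add_I_mul_pi_div_four x
  obtain ⟨hs', hc'⟩ := sinh_cosh_two_mul_sub_I_mul_pi_div_four x
  have him : -(phaseDeriv α (x + I * (π / 4))).im
      = 2 * (α + Real.tanh (2 * x)) / Real.cosh (2 * x) := by
    rw [im_phaseDeriv_eq α hcosh.ne' hs hc, neg_neg, Real.tanh_eq_sinh_div_cosh]
  have him' : -(phaseDeriv α (x - I * (π / 4))).im
      = -(2 * (α + Real.tanh (2 * x)) / Real.cosh (2 * x)) := by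
    rw [im_phaseDeriv_eq α (neg_ne_zero.2 hcosh.ne') hs' hc', neg_div_neg_eq, div_neg,
      neg_neg, Real.tanh_eq_sinh_div_cosh]
  have hpos : 0 < 2 * (α + Real.tanh (2 * x)) / Real.cosh (2 * x) :=
    div_pos (by linarith [Real.neg_one_lt_tanh (2 * x)]) hcosh
  have hd := hasDerivAt_re_phase_vertical α x (y := π / 4)
    (tanh_add_I_mul_mem_slitPlane x (by rw [show 2 * (π / 4) = π / 2 by ring]; simp))
  have hd' := hasDerivAt_re_phase_vertical α x (y := -(π / 4))
    (tanh_add_I_mul_mem_slitPlane x (by rw [show 2 * -(π / 4) = -(π / 2) by ring]; simp))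
  push_cast at hd hd'
  rw [mul_neg, ← sub_eq_add_neg, him'] at hd'
  rw [him] at hd
  exact ⟨him, hpos, him', neg_neg_of_pos hpos, hd, hd'⟩
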